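/- Let f ∈ C¹(S¹) with ∫ f dx = 0 and suppose there exists v ∈ C¹(S¹) with f = v ∘ T_2 − v. Set d_l := 2^{2^{2^l}} for l ∈ ℕ and define the sequence a_k := 3 if there exists l with d_l ≤ k < d_l + l, and a_k := 2 otherwise. Then for every α > 0, Var_μ(S_n)/n^α → 0 as n → ∞. -/

import Mathlib

/-!
Setting: the circle `S¹ = ℝ/ℤ` with Lebesgue (Haar) probability measure, realized as
`1`-periodic functions on `ℝ` together with Lebesgue measure restricted to `(0, 1]`.
For an integer `b ≥ 2`, the map `T_b x = bx (mod 1)` lifts to `x ↦ b * x` on `ℝ`, and its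
Perron–Frobenius operator (the `L²`-adjoint of the Koopman operator `g ↦ g ∘ T_b`) is
`(T̂*_b g)(x) = (1/b) ∑_{j<b} g((x+j)/b)`.
-/

open MeasureTheory ProbabilityTheory Filter Function
open scoped ENNReal Topology

/-- The Lebesgue (Haar) probability measure of the circle, realized on `(0, 1] ⊆ ℝ`. -/
noncomputable def circleMeasure : Measure ℝ := volume.restrict (Set.Ioc 0 1)

/-- The Perron–Frobenius operator of `T_b x = bx (mod 1)`, acting on (`1`-periodic)
functions on `ℝ`: `(T̂*_b g)(x) = (1/b) ∑_{j<b} g((x+j)/b)`. -/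
noncomputable def PFc (b : ℕ) (g : ℝ → ℝ) : ℝ → ℝ :=
  fun x => (1 / (b : ℝ)) * ∑ j ∈ Finset.range b, g ((x + j) / b)

/-- `T̂*_{b_1} ⋯ T̂*_{b_k} g` for a finite sequence `[b_1, …, b_k]`. -/
noncomputable def PFcList (l : List ℕ) (g : ℝ → ℝ) : ℝ → ℝ := l.foldr PFc g

/-- `PFcSeg a i j = T̂*_{[i..j]} = T̂*_{a_j} ⋯ T̂*_{a_i}` for `i ≤ j`, the identity otherwise. -/
noncomputable def PFcSeg (a : ℕ → ℕ) (i : ℕ) : ℕ → (ℝ → ℝ) → (ℝ → ℝ)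
  | 0 => id
  | j + 1 => if i ≤ j + 1 then fun g => PFc (a (j + 1)) (PFcSeg a i j g) else id

/-- `u_k = ∑_{i=1}^k T̂*_{[i+1..k]} f`. -/
noncomputable def uc (a : ℕ → ℕ) (f : ℝ → ℝ) (k : ℕ) : ℝ → ℝ :=
  fun x => ∑ i ∈ Finset.Icc 1 k, PFcSeg a (i + 1) k f x

/-- `T_{[k]} = T_{a_k} ∘ ⋯ ∘ T_{a_1}` is multiplication (mod 1) by `∏_{i=1}^k a_i`. -/
def prodA (a : ℕ → ℕ) (k : ℕ) : ℕ := ∏ i ∈ Finset.Icc 1 k, a i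

/-- The Birkhoff-like sums `S_n = ∑_{k=1}^n f ∘ T_{[k]}`, for a `1`-periodic `f`. -/
noncomputable def Sc (a : ℕ → ℕ) (f : ℝ → ℝ) (n : ℕ) : ℝ → ℝ :=
  fun x => ∑ k ∈ Finset.Icc 1 n, f ((prodA a k : ℝ) * x)

/-- The `C¹`-norm `‖g‖ = sup|g| + sup|g'|`. -/
noncomputable def Cnorm (g : ℝ → ℝ) : ℝ := (⨆ x : ℝ, |g x|) + ⨆ x : ℝ, |deriv g x|

/-- The pullback σ-algebra `T_b^{-1}(Borel)` on the circle, realized on `ℝ` as the σ-algebra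
generated by the lift `x ↦ fract (b * x)` of `T_b`. -/
noncomputable def circleSigma (b : ℕ) : MeasurableSpace ℝ :=
  MeasurableSpace.comap (fun x => Int.fract ((b : ℝ) * x)) Real.measurableSpace

/-- `cos²χ_k = ‖E[u_k | T_{a_{k+1}}^{-1}(Borel)]‖²_{L²} / ‖u_k‖²_{L²}` (`= 0` when `u_k = 0`,
by the convention `c / 0 = 0`). -/
noncomputable def cos2c (a : ℕ → ℕ) (f : ℝ → ℝ) (k : ℕ) : ℝ :=
  (∫ x, ((circleMeasure[uc a f k|circleSigma (a (k + 1))]) x) ^ 2 ∂circleMeasure) /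
    ∫ x, (uc a f k x) ^ 2 ∂circleMeasure

open Classical in
/-- The sequence of Example 2': `a_k = 3` if `d_l ≤ k < d_l + l` for some `l`, where
`d_l = 2^(2^(2^l))`, and `a_k = 2` otherwise. -/
noncomputable def seqTower : ℕ → ℕ := fun k =>
  if ∃ l : ℕ, 2 ^ 2 ^ 2 ^ l ≤ k ∧ k < 2 ^ 2 ^ 2 ^ l + l then 3 else 2

/-!
Because `f = v ∘ T_2 - v`, the sum `S_n` telescopes across every `k` with `a_k = 2`; each `k`
with `a_k ≠ 2` breaks the telescope at a cost of at most `2 sup |v|`. Hence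
`|S_n| ≤ 2 sup |v| (N_n + 1)`, where `N_n = #{k ≤ n | a_k ≠ 2}`. For the tower sequence
`N_n < (log₂ n + 1)²`, so `Var(S_n) ≤ ‖S_n‖²_∞ = O((log n)⁴) = o(n^α)`.
-/

open Finset

instance : IsProbabilityMeasure circleMeasure :=
  ⟨by simp [circleMeasure, Real.volume_Ioc]⟩

lemma prodA_succ (a : ℕ → ℕ) (n : ℕ) : prodA a (n + 1) = prodA a n * a (n + 1) :=
  prod_Icc_succ_top (Nat.le_add_left 1 n) a

lemma variance_le_sq_of_abs_le {Ω : Type*} [MeasurableSpace Ω] {μ : Measure Ω}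
    [IsProbabilityMeasure μ] {X : Ω → ℝ} {c : ℝ} (hX : AEMeasurable X μ)
    (h : ∀ᵐ ω ∂μ, |X ω| ≤ c) : variance X μ ≤ c ^ 2 := by
  have := variance_le_sq_of_bounded (h.mono fun ω hω => Set.mem_Icc.2 (abs_le.1 hω)) hX
  rwa [sub_neg_eq_add, ← two_mul, mul_div_cancel_left₀ c two_ne_zero] at this

section Coboundary

variable {a : ℕ → ℕ} {f v : ℝ → ℝ}

lemma Sc_eq_of_coboundary (hcob : ∀ x, f x = v (2 * x) - v x) (n : ℕ) (x : ℝ) :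
    Sc a f n x = v (2 * (prodA a n * x)) - v (2 * x) +
      ∑ k ∈ Icc 1 n, (v (2 * (prodA a (k - 1) * x)) - v (prodA a k * x)) := by
  induction n with
  | zero => simp [Sc, prodA]
  | succ n ih =>
    simp only [Sc] at ih ⊢
    rw [sum_Icc_succ_top (Nat.le_add_left 1 n), sum_Icc_succ_top (Nat.le_add_left 1 n), ih,
      hcob, Nat.add_sub_cancel]
    ring

lemma abs_Sc_le_of_coboundary {M : ℝ} (hv : ∀ y, |v y| ≤ M)
    (hcob : ∀ x, f x = v (2 * x) - v x) (n : ℕ) (x : ℝ) :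
    |Sc a f n x| ≤ 2 * M * (#{k ∈ Icc 1 n | a k ≠ 2} + 1) := by
  have hdefect : ∀ k ∈ Icc 1 n,
      v (2 * (prodA a (k - 1) * x)) - v (prodA a k * x) ≠ 0 → a k ≠ 2 := by
    intro k hk hne h2
    obtain ⟨j, rfl⟩ : ∃ j, k = j + 1 := ⟨k - 1, by grind⟩
    rw [Nat.add_sub_cancel, prodA_succ, h2] at hne
    push_cast at hne
    exact hne (by ring_nf)
  have hterm : ∀ k ∈ (Icc 1 n).filter (a · ≠ 2),
      |v (2 * (prodA a (k - 1) * x)) - v (prodA a k * x)| ≤ 2 * M := fun k _ =>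
    (abs_sub _ _).trans (by linarith [hv (2 * (prodA a (k - 1) * x)), hv (prodA a k * x)])
  rw [Sc_eq_of_coboundary hcob, ← sum_filter_of_ne hdefect]
  calc _ ≤ |v (2 * (prodA a n * x))| + |v (2 * x)| +
        ∑ k ∈ Icc 1 n with a k ≠ 2, |v (2 * (prodA a (k - 1) * x)) - v (prodA a k * x)| :=
        (abs_add_le _ _).trans (add_le_add (abs_sub _ _) (abs_sum_le_sum_abs _ _))
    _ ≤ M + M + #{k ∈ Icc 1 n | a k ≠ 2} • (2 * M) :=
        add_le_add (add_le_add (hv _) (hv _)) (sum_le_card_nsmul _ _ _ hterm)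
    _ = _ := by rw [nsmul_eq_mul]; ring

end Coboundary

lemma card_seqTower_ne_two_lt (n : ℕ) :
    #{k ∈ Icc 1 n | seqTower k ≠ 2} < (Nat.log 2 n + 1) ^ 2 := by
  set L := Nat.log 2 n
  have hsub : {k ∈ Icc 1 n | seqTower k ≠ 2} ⊆
      (range (L + 1)).biUnion fun l => Ico (2 ^ 2 ^ 2 ^ l) (2 ^ 2 ^ 2 ^ l + l) := by
    intro k hk
    simp only [mem_filter, mem_Icc] at hk
    obtain ⟨⟨-, hkn⟩, hk⟩ := hk
    obtain ⟨l, hl⟩ : ∃ l, 2 ^ 2 ^ 2 ^ l ≤ k ∧ k < 2 ^ 2 ^ 2 ^ l + l := by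
      by_contra h
      simp [seqTower, h] at hk
    have hpow : 2 ^ l ≤ 2 ^ 2 ^ 2 ^ l :=
      Nat.pow_le_pow_right two_pos ((Nat.lt_two_pow_self).le.trans
        (Nat.pow_le_pow_right two_pos Nat.lt_two_pow_self.le))
    simp only [mem_biUnion, mem_range, mem_Ico]
    exact ⟨l, Nat.lt_succ_of_le (Nat.le_log_of_pow_le one_lt_two (by omega)), hl⟩
  calc #{k ∈ Icc 1 n | seqTower k ≠ 2}
      ≤ ∑ l ∈ range (L + 1), #(Ico (2 ^ 2 ^ 2 ^ l) (2 ^ 2 ^ 2 ^ l + l)) :=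
        (card_le_card hsub).trans card_biUnion_le
    _ ≤ ∑ _l ∈ range (L + 1), L :=
        sum_le_sum fun l hl => by simpa using Nat.lt_succ_iff.1 (mem_range.1 hl)
    _ < (L + 1) ^ 2 := by simp only [sum_const, card_range, smul_eq_mul]; nlinarith

lemma tendsto_natLog_add_one_pow_div_rpow {b : ℕ} (hb : 1 < b) (k : ℕ) {α : ℝ} (hα : 0 < α) :
    Tendsto (fun n : ℕ => ((Nat.log b n + 1 : ℕ) : ℝ) ^ k / (n : ℝ) ^ α) atTop (𝓝 0) := by
  set r : ℝ := (b : ℝ) ^ α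
  have hr : 1 < r := Real.one_lt_rpow (by exact_mod_cast hb) hα
  have hgeom : Tendsto (fun L : ℕ => ((L + 1 : ℕ) : ℝ) ^ k / r ^ L) atTop (𝓝 0) := by
    have := ((tendsto_pow_const_div_const_pow_of_one_lt k hr).comp
      (tendsto_add_atTop_nat 1)).mul_const r
    rw [zero_mul] at this
    refine this.congr fun L => ?_
    simp only [comp_apply, pow_succ]
    field_simp
  have hlog : Tendsto (Nat.log b) atTop atTop :=
    tendsto_atTop_atTop.2 fun L => ⟨b ^ L, fun n hn => Nat.le_log_of_pow_le hb hn⟩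
  refine squeeze_zero' (Eventually.of_forall fun n => by positivity) ?_ (hgeom.comp hlog)
  filter_upwards [eventually_ne_atTop 0] with n hn
  have hrn : r ^ Nat.log b n ≤ (n : ℝ) ^ α := by
    rw [Real.rpow_pow_comm (Nat.cast_nonneg b)]
    exact Real.rpow_le_rpow (by positivity) (by exact_mod_cast Nat.pow_log_le_self b hn) hα.le
  exact div_le_div_of_nonneg_left (by positivity) (by positivity) hrn

theorem variance_subpolynomial_for_tower_sequence
    (f v : ℝ → ℝ)
    (hf_C1 : ContDiff ℝ 1 f)
    (hv_per : Periodic v 1) (hv_C1 : ContDiff ℝ 1 v)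
    (hcob : ∀ x, f x = v (2 * x) - v x) :
    ∀ α : ℝ, 0 < α →
      Tendsto (fun n : ℕ => variance (Sc seqTower f n) circleMeasure / (n : ℝ) ^ α)
        atTop (𝓝 0) := by
  intro α hα
  obtain ⟨M, hM⟩ := isBounded_iff_forall_norm_le.1
    (hv_per.isBounded_of_continuous one_ne_zero hv_C1.continuous)
  have hv : ∀ y, |v y| ≤ M := fun y => hM _ (Set.mem_range_self y)
  have hS : ∀ n x, |Sc seqTower f n x| ≤ 2 * M * ((Nat.log 2 n + 1 : ℕ) : ℝ) ^ 2 := fun n x => by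
    refine (abs_Sc_le_of_coboundary hv hcob n x).trans (mul_le_mul_of_nonneg_left ?_ ?_)
    · exact_mod_cast card_seqTower_ne_two_lt n
    · linarith [(abs_nonneg _).trans (hv 0)]
  have hSc_meas : ∀ n, AEMeasurable (Sc seqTower f n) circleMeasure := fun n =>
    (continuous_finsetSum _ fun k _ =>
      hf_C1.continuous.comp (continuous_const_mul _)).aemeasurable
  have hratio : ∀ n, variance (Sc seqTower f n) circleMeasure / (n : ℝ) ^ α ≤
      (2 * M) ^ 2 * (((Nat.log 2 n + 1 : ℕ) : ℝ) ^ 4 / (n : ℝ) ^ α) := fun n => by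
    rw [mul_div_assoc', show (4 : ℕ) = 2 * 2 from rfl, pow_mul, ← mul_pow]
    exact div_le_div_of_nonneg_right
      (variance_le_sq_of_abs_le (hSc_meas n) (ae_of_all _ (hS n))) (by positivity)
  have hlim := (tendsto_natLog_add_one_pow_div_rpow one_lt_two 4 hα).const_mul ((2 * M) ^ 2)
  rw [mul_zero] at hlim
  exact squeeze_zero (fun n => div_nonneg (variance_nonneg _ _) (by positivity)) hratio hlim
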